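/- Let G ∈ K((z))^{hd} and for j = 1,...,n define Δ_j^{(k)} G = coefficient of N(Z_j)^k in G(Z_j), where Z_j = (z_j z_1,...,z_j z_{j-1}, z_j, z_j z_{j+1},..., z_j z_n) and N(Z_j) = ∏_i (Z_j)_i. Define Δ^{(k)} = ((k!)^n / n) Σ_j Δ_j^{(k)}. Then for any permutation σ of {1,...,n}, Δ^{(k)} applied to h(z_{σ(1)},...,z_{σ(n)}) equals Δ^{(k)} applied to h(z_1,...,z_n), for all h ∈ K((z))^{hd}. -/

import Mathlib

/-- Substitution `g ↦ g(Z_j)` where `Z_j = (z_j z_1, …, z_j, …, z_j z_n)`. -/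
noncomputable def substZ {K : Type*} [CommRing K] {n : ℕ} (j : Fin n)
    (g : MvPowerSeries (Fin n) K) : MvPowerSeries (Fin n) K :=
  fun f => if (∑ i ∈ Finset.univ.erase j, f i) ≤ f j
    then MvPowerSeries.coeff (Finsupp.update f j (f j - ∑ i ∈ Finset.univ.erase j, f i)) g
    else 0

/-- The variable permutation `g(z₁,…,zₙ) ↦ g(z_{σ(1)},…,z_{σ(n)})` on power series. -/
noncomputable def permSeries {K : Type*} [CommRing K] {n : ℕ} (σ : Equiv.Perm (Fin n))
    (g : MvPowerSeries (Fin n) K) : MvPowerSeries (Fin n) K :=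
  fun f => MvPowerSeries.coeff (Finsupp.equivMapDomain σ⁻¹ f) g

/-- A powerful homogeneous polynomial of degree `d`, viewed as a power series. -/
def PowerfulHomog (K : Type*) [Field K] (n d : ℕ) (p : MvPowerSeries (Fin n) K) : Prop :=
  (∀ e : Fin n →₀ ℕ, (∑ i, e i) ≠ d → MvPowerSeries.coeff e p = 0) ∧
  ∀ j : Fin n, MvPowerSeries.coeff (Finsupp.single j d) p ≠ 0

/-- The exponent of the monomial `z_j^d · N(Z_j)^k`, namely `k` at each `i ≠ j` and
`nk + d` at `j`. -/
noncomputable def expoZ (n k d : ℕ) (j : Fin n) : Fin n →₀ ℕ :=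
  Finsupp.equivFunOnFinite.symm (fun i => if i = j then n * k + d else k)

section Aux

variable {K : Type*} [CommRing K] {n : ℕ}

lemma coeff_eq (φ : MvPowerSeries (Fin n) K) (f : Fin n →₀ ℕ) :
    MvPowerSeries.coeff f φ = φ f := rfl

lemma emap_apply (σ : Equiv.Perm (Fin n)) (f : Fin n →₀ ℕ) (i : Fin n) :
    (Finsupp.equivMapDomain σ⁻¹ f) i = f (σ i) := by
  simp [Finsupp.equivMapDomain_apply, Equiv.Perm.inv_def]

lemma emap_add (τ : Equiv.Perm (Fin n)) (u v : Fin n →₀ ℕ) :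
    Finsupp.equivMapDomain τ (u + v)
      = Finsupp.equivMapDomain τ u + Finsupp.equivMapDomain τ v := by
  ext i; simp [Finsupp.equivMapDomain_apply]

lemma emap_emap (σ : Equiv.Perm (Fin n)) (f : Fin n →₀ ℕ) :
    Finsupp.equivMapDomain σ⁻¹ (Finsupp.equivMapDomain σ f) = f := by
  ext i; simp [Finsupp.equivMapDomain_apply, Equiv.Perm.inv_def]

lemma emap_emap' (σ : Equiv.Perm (Fin n)) (f : Fin n →₀ ℕ) :
    Finsupp.equivMapDomain σ (Finsupp.equivMapDomain σ⁻¹ f) = f := by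
  ext i; simp [Finsupp.equivMapDomain_apply, Equiv.Perm.inv_def]

lemma permSeries_coeff (σ : Equiv.Perm (Fin n)) (g : MvPowerSeries (Fin n) K)
    (f : Fin n →₀ ℕ) :
    MvPowerSeries.coeff f (permSeries σ g)
      = MvPowerSeries.coeff (Finsupp.equivMapDomain σ⁻¹ f) g := rfl

lemma permSeries_injective (σ : Equiv.Perm (Fin n)) :
    Function.Injective (permSeries (K := K) σ) := by
  intro a b hab
  ext f
  have := congrArg (fun φ => MvPowerSeries.coeff (Finsupp.equivMapDomain σ f) φ) hab
  simpa [permSeries_coeff, emap_emap] using this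

lemma permSeries_mul (σ : Equiv.Perm (Fin n)) (a b : MvPowerSeries (Fin n) K) :
    permSeries σ (a * b) = permSeries σ a * permSeries σ b := by
  classical
  ext f
  rw [permSeries_coeff, MvPowerSeries.coeff_mul, MvPowerSeries.coeff_mul]
  refine Finset.sum_nbij'
    (fun uv => (Finsupp.equivMapDomain σ uv.1, Finsupp.equivMapDomain σ uv.2))
    (fun uv => (Finsupp.equivMapDomain σ⁻¹ uv.1, Finsupp.equivMapDomain σ⁻¹ uv.2))
    ?_ ?_ ?_ ?_ ?_
  · rintro ⟨u, v⟩ huv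
    rw [Finset.HasAntidiagonal.mem_antidiagonal] at huv ⊢
    show Finsupp.equivMapDomain σ u + Finsupp.equivMapDomain σ v = f
    rw [← emap_add, huv, emap_emap']
  · rintro ⟨u, v⟩ huv
    rw [Finset.HasAntidiagonal.mem_antidiagonal] at huv ⊢
    show Finsupp.equivMapDomain σ⁻¹ u + Finsupp.equivMapDomain σ⁻¹ v
      = Finsupp.equivMapDomain σ⁻¹ f
    rw [← emap_add, huv]
  · rintro ⟨u, v⟩ _
    simp [emap_emap]
  · rintro ⟨u, v⟩ _
    simp [emap_emap']
  · rintro ⟨u, v⟩ _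
    simp [permSeries_coeff, emap_emap]

lemma emap_single (σ : Equiv.Perm (Fin n)) (j : Fin n) (d : ℕ) :
    Finsupp.equivMapDomain σ⁻¹ (Finsupp.single (σ j) d) = Finsupp.single j d := by
  rw [Finsupp.equivMapDomain_single]
  simp [Equiv.Perm.inv_def]

lemma permSeries_X_pow (σ : Equiv.Perm (Fin n)) (j : Fin n) (d : ℕ) :
    permSeries (K := K) σ ((MvPowerSeries.X j) ^ d) = (MvPowerSeries.X (σ j)) ^ d := by
  classical
  ext f
  rw [permSeries_coeff, MvPowerSeries.coeff_X_pow, MvPowerSeries.coeff_X_pow]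
  congr 1
  simp only [eq_iff_iff]
  constructor
  · intro hf
    have : Finsupp.equivMapDomain σ (Finsupp.equivMapDomain σ⁻¹ f)
        = Finsupp.equivMapDomain σ (Finsupp.single j d) := by rw [hf]
    rw [emap_emap', Finsupp.equivMapDomain_single] at this
    simpa using this
  · intro hf
    subst hf
    exact emap_single σ j d

lemma substZ_permSeries (σ : Equiv.Perm (Fin n)) (j : Fin n) (g : MvPowerSeries (Fin n) K) :
    substZ (σ j) (permSeries σ g) = permSeries σ (substZ j g) := by
  classical
  ext f
  rw [coeff_eq, coeff_eq]
  show (substZ (σ j) (permSeries σ g)) f = (substZ j g) (Finsupp.equivMapDomain σ⁻¹ f)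
  unfold substZ
  have hsum : (∑ i ∈ Finset.univ.erase j, (Finsupp.equivMapDomain σ⁻¹ f) i)
      = ∑ i ∈ Finset.univ.erase (σ j), f i := by
    simp only [emap_apply]
    refine Finset.sum_nbij' (fun i => σ i) (fun i => σ⁻¹ i) ?_ ?_ ?_ ?_ ?_
    · intro a ha
      simp only [Finset.mem_erase, Finset.mem_univ, and_true] at ha ⊢
      exact fun hc => ha (σ.injective hc)
    · intro a ha
      simp only [Finset.mem_erase, Finset.mem_univ, and_true] at ha ⊢
      intro hc
      apply ha
      rw [← hc]
      simp
    · intro a _; simp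
    · intro a _; simp
    · intro a _; rfl
  have hval : (Finsupp.equivMapDomain σ⁻¹ f) j = f (σ j) := emap_apply σ f j
  rw [hsum, hval]
  by_cases hc : (∑ i ∈ Finset.univ.erase (σ j), f i) ≤ f (σ j)
  · rw [if_pos hc, if_pos hc]
    show MvPowerSeries.coeff (Finsupp.equivMapDomain σ⁻¹
      (Finsupp.update f (σ j) (f (σ j) - ∑ i ∈ Finset.univ.erase (σ j), f i))) g = _
    have hupd : Finsupp.equivMapDomain σ⁻¹
          (f.update (σ j) (f (σ j) - ∑ i ∈ Finset.univ.erase (σ j), f i))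
        = (Finsupp.equivMapDomain σ⁻¹ f).update j
          (f (σ j) - ∑ i ∈ Finset.univ.erase (σ j), f i) := by
      ext i
      rw [emap_apply]
      simp only [Finsupp.coe_update, Function.update_apply, emap_apply]
      rcases eq_or_ne i j with h | h
      · simp [h]
      · have h1 : σ i ≠ σ j := fun hc' => h (σ.injective hc')
        simp [h, h1]
    rw [hupd]
  · rw [if_neg hc, if_neg hc]

lemma emap_expoZ (σ : Equiv.Perm (Fin n)) (k d : ℕ) (j : Fin n) :
    Finsupp.equivMapDomain σ⁻¹ (expoZ n k d (σ j)) = expoZ n k d j := by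
  ext i
  rw [emap_apply]
  simp only [expoZ, Finsupp.coe_equivFunOnFinite_symm]
  rcases eq_or_ne i j with h | h
  · simp [h]
  · have h1 : σ i ≠ σ j := fun hc' => h (σ.injective hc')
    simp [h, h1]

end Aux

/-- The Shintani operator `Δ^{(k)}` is invariant under permutation of the variables:
writing `G = g/p ∈ K((z))^{hd}`, `h_j` for `z_j^d G(Z_j)` and `h'_j` for the analogous
series for the permuted element, the averaged coefficients agree. -/
theorem stmt14 (K : Type*) [Field K] [CharZero K] (n k d : ℕ) (hn : 0 < n)
    (σ : Equiv.Perm (Fin n)) (g p : MvPowerSeries (Fin n) K)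
    (hp : PowerfulHomog K n d p)
    (h h' : Fin n → MvPowerSeries (Fin n) K)
    (hh : ∀ j, h j * substZ j p = (MvPowerSeries.X j) ^ d * substZ j g)
    (hh' : ∀ j, h' j * substZ j (permSeries σ p)
      = (MvPowerSeries.X j) ^ d * substZ j (permSeries σ g)) :
    ((Nat.factorial k : K) ^ n / (n : K)) *
        ∑ j, MvPowerSeries.coeff (expoZ n k d j) (h' j)
      = ((Nat.factorial k : K) ^ n / (n : K)) *
        ∑ j, MvPowerSeries.coeff (expoZ n k d j) (h j) := by
  classical
  -- substZ j p is nonzero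
  have hsub_ne : ∀ j : Fin n, substZ j p ≠ 0 := by
    intro j hzero
    have hcoeff : MvPowerSeries.coeff (Finsupp.single j d) (substZ j p)
        = MvPowerSeries.coeff (Finsupp.single j d) p := by
      rw [coeff_eq]
      unfold substZ
      have hs : (∑ i ∈ Finset.univ.erase j, (Finsupp.single j d : Fin n →₀ ℕ) i) = 0 := by
        apply Finset.sum_eq_zero
        intro i hi
        simp only [Finset.mem_erase] at hi
        rw [Finsupp.single_apply, if_neg (fun hc => hi.1 hc.symm)]
      rw [hs]
      rw [if_pos (Nat.zero_le _)]
      have hupd : (Finsupp.single j d : Fin n →₀ ℕ).update j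
          ((Finsupp.single j d : Fin n →₀ ℕ) j - 0) = Finsupp.single j d := by
        ext i
        simp only [Finsupp.coe_update, Function.update_apply]
        rcases eq_or_ne i j with hc | hc
        · subst hc; simp
        · simp [hc]
      rw [hupd]
    rw [hzero] at hcoeff
    simp only [map_zero] at hcoeff
    exact hp.2 j hcoeff.symm
  -- h' (σ j) = permSeries σ (h j)
  have key : ∀ j : Fin n, h' (σ j) = permSeries σ (h j) := by
    intro j
    have h1 := hh' (σ j)
    rw [substZ_permSeries σ j p, substZ_permSeries σ j g] at h1
    have h2 : permSeries σ (h j) * permSeries σ (substZ j p)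
        = (MvPowerSeries.X (σ j)) ^ d * permSeries σ (substZ j g) := by
      rw [← permSeries_mul, hh j, permSeries_mul, permSeries_X_pow]
    have hne : permSeries σ (substZ j p) ≠ 0 := by
      intro hzero
      apply hsub_ne j
      apply permSeries_injective σ
      rw [hzero]
      ext f
      rw [permSeries_coeff]
      simp
    apply mul_right_cancel₀ hne
    rw [h1, h2]
  congr 1
  rw [← Equiv.sum_comp σ (fun j => MvPowerSeries.coeff (expoZ n k d j) (h' j))]
  apply Finset.sum_congr rfl
  intro j _
  rw [key j, permSeries_coeff, emap_expoZ]
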